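/- arXiv:2602.03258 — 3 statements merged into one kernel-verified Lean document; each statement's English description precedes it below -/
import Mathlib

section
/- Let n and B be positive integers, let x_1,…,x_n ∈ ℝ with empirical CDF F(t) = (1/n)·#{i : x_i ≤ t}, and let F̃ : ℝ → ℝ satisfy |F̃(t) − F(t)| ≤ 1/B for all t ∈ ℝ. Suppose T ⊆ ℝ is a set of candidate thresholds such that for every b ∈ {0,1,…,B} there exists t ∈ T with F̃(t) = b/B. Then for every t_cent ∈ ℝ there exists t_fed ∈ T such that (1/n)·#{i : 𝟙(x_i ≤ t_cent) ≠ 𝟙(x_i ≤ t_fed)} ≤ 3/(2B). -/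
/-!
The samples on which the thresholds `s` and `t` disagree are exactly those lying between them,
so their fraction is `|F t - F s|`. Rounding `B · F t_cent` to the nearest integer `b ∈ [0, B]`
gives `|b/B - F t_cent| ≤ 1/(2B)`; a candidate `t_fed` with `F̃ t_fed = b/B` then satisfies
`|F t_fed - F t_cent| ≤ |F t_fed - F̃ t_fed| + |b/B - F t_cent| ≤ 1/B + 1/(2B)`.
-/

open Finset

section Disagreement

variable {ι α : Type*} [LinearOrder α] (s : Finset ι) (x : ι → α)

lemma filter_le_subset_filter_le {a b : α} (hab : a ≤ b) :
    s.filter (fun i => x i ≤ a) ⊆ s.filter (fun i => x i ≤ b) := fun i hi => by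
  simp only [mem_filter] at hi ⊢
  exact ⟨hi.1, hi.2.trans hab⟩

lemma card_filter_ite_le_ne_of_le {a b : α} (hab : a ≤ b) :
    (#(s.filter fun i => (if x i ≤ a then (1 : ℕ) else 0) ≠ (if x i ≤ b then 1 else 0)) : ℝ) =
      #(s.filter fun i => x i ≤ b) - #(s.filter fun i => x i ≤ a) := by
  classical
  have hsub := filter_le_subset_filter_le s x hab
  rw [← Nat.cast_sub (card_le_card hsub), ← card_sdiff_of_subset hsub]
  congr 2
  ext i
  simp only [mem_filter, mem_sdiff]
  by_cases ha : x i ≤ a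
  · simp [ha, ha.trans hab]
  · by_cases hb : x i ≤ b <;> simp [ha, hb]

lemma card_filter_ite_le_ne (a b : α) :
    (#(s.filter fun i => (if x i ≤ a then (1 : ℕ) else 0) ≠ (if x i ≤ b then 1 else 0)) : ℝ) =
      |(#(s.filter fun i => x i ≤ b) : ℝ) - #(s.filter fun i => x i ≤ a)| := by
  rcases le_total a b with hab | hba
  · rw [card_filter_ite_le_ne_of_le s x hab, abs_of_nonneg (sub_nonneg.mpr
      (by exact_mod_cast card_le_card (filter_le_subset_filter_le s x hab)))]
  · simp_rw [ne_comm (a := ite (x _ ≤ a) 1 0)]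
    rw [card_filter_ite_le_ne_of_le s x hba, abs_sub_comm, abs_of_nonneg (sub_nonneg.mpr
      (by exact_mod_cast card_le_card (filter_le_subset_filter_le s x hba)))]

end Disagreement

lemma exists_nat_le_abs_div_sub_le {B : ℕ} (hB : 0 < B) {y : ℝ} (hy₀ : 0 ≤ y) (hy₁ : y ≤ 1) :
    ∃ b : ℕ, b ≤ B ∧ |(b : ℝ) / B - y| ≤ 1 / (2 * B) := by
  have hBpos : (0 : ℝ) < B := by exact_mod_cast hB
  have hr : 0 ≤ B * y + 1 / 2 := by positivity
  refine ⟨⌊B * y + 1 / 2⌋₊, ?_, ?_⟩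
  · have : B * y + 1 / 2 < B + 1 := by nlinarith
    exact Nat.lt_succ_iff.mp ((Nat.floor_lt hr).mpr (by exact_mod_cast this))
  · have h₁ := Nat.floor_le hr
    have h₂ := Nat.lt_floor_add_one (B * y + 1 / 2)
    have hround : |(⌊B * y + 1 / 2⌋₊ : ℝ) - B * y| ≤ 1 / 2 := abs_le.mpr ⟨by linarith, by linarith⟩
    calc |(⌊B * y + 1 / 2⌋₊ : ℝ) / B - y| = |(⌊B * y + 1 / 2⌋₊ : ℝ) - B * y| / B := by
          rw [div_sub' hBpos.ne', abs_div, abs_of_pos hBpos]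
      _ ≤ 1 / 2 / B := by gcongr
      _ = 1 / (2 * B) := by rw [div_div]

theorem stmt_3_general (n B : ℕ) (hB : 0 < B) (x : Fin n → ℝ)
    (F : ℝ → ℝ)
    (hF : ∀ t, F t = ((Finset.univ.filter (fun i => x i ≤ t)).card : ℝ) / n)
    (Ftilde : ℝ → ℝ) (hclose : ∀ t, |Ftilde t - F t| ≤ 1 / B)
    (T : Set ℝ) (hT : ∀ b : ℕ, b ≤ B → ∃ t ∈ T, Ftilde t = (b : ℝ) / B) :
    ∀ tcent : ℝ, ∃ tfed ∈ T,
      ((Finset.univ.filter (fun i =>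
          (if x i ≤ tcent then (1 : ℕ) else 0) ≠ (if x i ≤ tfed then (1 : ℕ) else 0))).card : ℝ)
        / n ≤ 3 / (2 * B) := by
  intro tcent
  have hF₀ : 0 ≤ F tcent := by rw [hF]; positivity
  have hF₁ : F tcent ≤ 1 := by
    rw [hF]
    exact div_le_one_of_le₀ (by exact_mod_cast (card_filter_le _ _).trans (card_fin n).le)
      n.cast_nonneg
  obtain ⟨b, hbB, hb⟩ := exists_nat_le_abs_div_sub_le hB hF₀ hF₁
  obtain ⟨tfed, htfed, hFtilde⟩ := hT b hbB
  refine ⟨tfed, htfed, ?_⟩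
  calc _ = |F tfed - F tcent| := by
        rw [card_filter_ite_le_ne, hF, hF, ← sub_div, abs_div, Nat.abs_cast]
    _ ≤ |F tfed - Ftilde tfed| + |Ftilde tfed - F tcent| := abs_sub_le _ _ _
    _ ≤ 1 / B + 1 / (2 * B) := by
        rw [abs_sub_comm]
        exact add_le_add (hclose tfed) (hFtilde ▸ hb)
    _ = 3 / (2 * B) := by field_simp; norm_num

/-- Corollary 1 (approximation of centralized midpoint splits): if `Ftilde`
approximates the empirical CDF `F` uniformly within `1/B` and the candidate
set `T` realizes all values `b/B` of `Ftilde`, then for every centralized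
threshold there is a federated candidate whose induced left-child assignment
disagrees on at most a `3/(2B)` fraction of the samples. -/
theorem stmt_3 (n B : ℕ) (hn : 0 < n) (hB : 0 < B) (x : Fin n → ℝ)
    (F : ℝ → ℝ)
    (hF : ∀ t, F t = ((Finset.univ.filter (fun i => x i ≤ t)).card : ℝ) / n)
    (Ftilde : ℝ → ℝ) (hclose : ∀ t, |Ftilde t - F t| ≤ 1 / B)
    (T : Set ℝ) (hT : ∀ b : ℕ, b ≤ B → ∃ t ∈ T, Ftilde t = (b : ℝ) / B) :
    ∀ tcent : ℝ, ∃ tfed ∈ T,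
      ((Finset.univ.filter (fun i =>
          (if x i ≤ tcent then (1 : ℕ) else 0) ≠ (if x i ≤ tfed then (1 : ℕ) else 0))).card : ℝ)
        / n ≤ 3 / (2 * B) :=
  stmt_3_general n B hB x F hF Ftilde hclose T hT
end

section
/- Let K be a positive integer. For each client k ∈ {1,…,K}, let client k's node sample consist of pairs (x_{k,i}, y_{k,i}) ∈ ℝ × ℝ for i = 1,…,n_k, and fix a threshold t ∈ ℝ splitting each client's sample into left part L_k = {i : x_{k,i} ≤ t} and right part R_k = {i : x_{k,i} > t}; assume L_k and R_k are nonempty for every k. For any finite nonempty multiset of reals, write Var for its empirical variance. Let ΔI_k = Var(y_k) − (|L_k|/n_k)·Var(y_k restricted to L_k) − (|R_k|/n_k)·Var(y_k restricted to R_k) be client k's local impurity reduction, and let ΔI be the analogous impurity reduction computed on the pooled sample (the disjoint union over clients), with pooled node size n = ∑_k n_k, pooled left size n_L = ∑_k |L_k| and right size n_R = ∑_k |R_k|. For each part m ∈ {node, left, right}, let E(m) = ∑_k (n_{m,k}/n_m)·(ȳ_{m,k} − ȳ_m)², where ȳ_{m,k} is client k's empirical mean of y over part m and ȳ_m is the pooled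 empirical mean over part m. Then ΔI = ∑_{k=1}^K (n_k/n)·ΔI_k + E(node) − (n_L/n)·E(left) − (n_R/n)·E(right). -/
/-! For any centre `M`, the squared deviations of a sample from `M` split into the squared
deviations from the sample mean plus `n · (mean − M)²`, because deviations from the mean sum to
zero. Summing this over the clients, the pooled variance of each part (node, left, right) is the
size-weighted average of the local variances plus the heterogeneity term of that part. The
impurity reductions are linear combinations of these variances, and the weights rescale
consistently: `(n_L / n) · (|L_k| / n_L) = |L_k| / n`. -/

open Finset

lemma div_mul_div_cancel_of_imp {G₀ : Type*} [CommGroupWithZero G₀] {a b c : G₀}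
    (h : b = 0 → a = 0) : b / c * (a / b) = a / c := by
  rw [div_mul_eq_mul_div, mul_div_cancel_of_imp' h]

lemma mul_sum_div_mul_eq_sum_div_mul {κ : Type*} (s : Finset κ) (w a : κ → ℝ) {W N : ℝ}
    (hw : ∀ k ∈ s, W = 0 → w k = 0) :
    W / N * ∑ k ∈ s, w k / W * a k = ∑ k ∈ s, w k / N * a k := by
  rw [mul_sum]
  refine sum_congr rfl fun k hk => ?_
  rw [← mul_assoc, div_mul_div_cancel_of_imp (hw k hk)]

section SumSquares

variable {ι : Type*} (s : Finset ι) (f : ι → ℝ)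

lemma Finset.card_mul_sum_div_card : (#s : ℝ) * ((∑ i ∈ s, f i) / #s) = ∑ i ∈ s, f i :=
  mul_div_cancel_of_imp' fun h => by simp [card_eq_zero.mp (by exact_mod_cast h)]

lemma Finset.sum_sub_sq_eq_sum_sub_mean_sq_add (M : ℝ) :
    ∑ i ∈ s, (f i - M) ^ 2
      = ∑ i ∈ s, (f i - (∑ j ∈ s, f j) / #s) ^ 2 + #s * ((∑ j ∈ s, f j) / #s - M) ^ 2 := by
  set m := (∑ j ∈ s, f j) / #s
  have sum_sub_mean : ∑ i ∈ s, (f i - m) = 0 := by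
    rw [sum_sub_distrib, sum_const, nsmul_eq_mul, card_mul_sum_div_card, sub_self]
  have expand : ∀ i ∈ s, (f i - M) ^ 2 = (f i - m) ^ 2 + 2 * (m - M) * (f i - m) + (m - M) ^ 2 :=
    fun i _ => by ring
  rw [sum_congr rfl expand, sum_add_distrib, sum_add_distrib, ← mul_sum, sum_sub_mean, sum_const,
    nsmul_eq_mul, mul_zero, add_zero]

end SumSquares

lemma sum_sum_sub_sq_div_eq {κ : Type*} [Fintype κ] {ι : κ → Type*} (s : ∀ k, Finset (ι k))
    (f : ∀ k, ι k → ℝ) (M N : ℝ) (m V : κ → ℝ)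
    (hm : ∀ k, m k = (∑ i ∈ s k, f k i) / #(s k))
    (hV : ∀ k, V k = (∑ i ∈ s k, (f k i - m k) ^ 2) / #(s k)) :
    (∑ k, ∑ i ∈ s k, (f k i - M) ^ 2) / N
      = ∑ k, (#(s k) / N) * V k + ∑ k, (#(s k) / N) * (m k - M) ^ 2 := by
  have local_split : ∀ k, ∑ i ∈ s k, (f k i - M) ^ 2 = #(s k) * V k + #(s k) * (m k - M) ^ 2 := by
    intro k
    rw [hV, card_mul_sum_div_card, hm]
    exact sum_sub_sq_eq_sum_sub_mean_sq_add (s k) (f k) M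
  simp only [local_split, sum_add_distrib, add_div, sum_div, mul_div_right_comm]

theorem stmt_10_general (K : ℕ) (n : Fin K → ℕ)
    (y : (k : Fin K) → Fin (n k) → ℝ)
    -- left and right parts of each client's sample
    (Lset Rset : (k : Fin K) → Finset (Fin (n k)))
    -- pooled sizes
    (Nr nL nR : ℝ)
    (hnL : nL = ∑ k, ((Lset k).card : ℝ))
    (hnR : nR = ∑ k, ((Rset k).card : ℝ))
    -- local empirical means over the node, left and right parts
    (ybar ybarL ybarR : Fin K → ℝ)
    (hybar : ∀ k, ybar k = (∑ i, y k i) / n k)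
    (hybarL : ∀ k, ybarL k = (∑ i ∈ Lset k, y k i) / (Lset k).card)
    (hybarR : ∀ k, ybarR k = (∑ i ∈ Rset k, y k i) / (Rset k).card)
    -- local empirical variances over the node, left and right parts
    (Vk VLk VRk : Fin K → ℝ)
    (hVk : ∀ k, Vk k = (∑ i, (y k i - ybar k) ^ 2) / n k)
    (hVLk : ∀ k, VLk k = (∑ i ∈ Lset k, (y k i - ybarL k) ^ 2) / (Lset k).card)
    (hVRk : ∀ k, VRk k = (∑ i ∈ Rset k, (y k i - ybarR k) ^ 2) / (Rset k).card)
    -- local impurity reductions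
    (DIk : Fin K → ℝ)
    (hDIk : ∀ k, DIk k
      = Vk k - (((Lset k).card : ℝ) / n k) * VLk k - (((Rset k).card : ℝ) / n k) * VRk k)
    -- pooled empirical means
    (Ybar YbarL YbarR : ℝ)
    -- pooled empirical variances
    (Vpool VLpool VRpool : ℝ)
    (hVpool : Vpool = (∑ k, ∑ i, (y k i - Ybar) ^ 2) / Nr)
    (hVLpool : VLpool = (∑ k, ∑ i ∈ Lset k, (y k i - YbarL) ^ 2) / nL)
    (hVRpool : VRpool = (∑ k, ∑ i ∈ Rset k, (y k i - YbarR) ^ 2) / nR)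
    -- pooled impurity reduction
    (DI : ℝ)
    (hDI : DI = Vpool - (nL / Nr) * VLpool - (nR / Nr) * VRpool)
    -- heterogeneity (Jensen-gap) terms
    (Enode EL ER : ℝ)
    (hEnode : Enode = ∑ k, ((n k : ℝ) / Nr) * (ybar k - Ybar) ^ 2)
    (hEL : EL = ∑ k, (((Lset k).card : ℝ) / nL) * (ybarL k - YbarL) ^ 2)
    (hER : ER = ∑ k, (((Rset k).card : ℝ) / nR) * (ybarR k - YbarR) ^ 2) :
    DI = (∑ k, ((n k : ℝ) / Nr) * DIk k) + Enode - (nL / Nr) * EL - (nR / Nr) * ER := by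
  have card_univ_eq (k : Fin K) : (#(univ : Finset (Fin (n k))) : ℝ) = n k := by simp
  have node : Vpool = ∑ k, (n k / Nr) * Vk k + Enode := by
    have := sum_sum_sub_sq_div_eq (fun k => univ) y Ybar Nr ybar Vk
      (fun k => by rw [hybar, card_univ_eq]) (fun k => by rw [hVk, card_univ_eq])
    simpa only [card_univ_eq, ← hVpool, ← hEnode] using this
  have left : VLpool = ∑ k, (#(Lset k) / nL) * VLk k + EL := by
    rw [hVLpool, hEL, sum_sum_sub_sq_div_eq Lset y YbarL nL ybarL VLk hybarL hVLk]
  have right : VRpool = ∑ k, (#(Rset k) / nR) * VRk k + ER := by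
    rw [hVRpool, hER, sum_sum_sub_sq_div_eq Rset y YbarR nR ybarR VRk hybarR hVRk]
  have card_eq_zero_of_size {k : Fin K} (s : Finset (Fin (n k))) :
      (n k : ℝ) = 0 → (#s : ℝ) = 0 := by
    intro h
    have := s.card_le_univ
    simp_all
  have card_eq_zero_of_sum {s : ∀ k, Finset (Fin (n k))} {N : ℝ}
      (hN : N = ∑ k, (#(s k) : ℝ)) (k : Fin K) : N = 0 → (#(s k) : ℝ) = 0 := by
    intro h
    rw [hN, sum_eq_zero_iff_of_nonneg fun _ _ => by positivity] at h
    exact h k (mem_univ k)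
  have local_gain (k : Fin K) : n k / Nr * DIk k
      = n k / Nr * Vk k - #(Lset k) / Nr * VLk k - #(Rset k) / Nr * VRk k := by
    rw [hDIk, mul_sub, mul_sub, ← mul_assoc, ← mul_assoc,
      div_mul_div_cancel_of_imp (card_eq_zero_of_size _),
      div_mul_div_cancel_of_imp (card_eq_zero_of_size _)]
  rw [hDI, node, left, right, sum_congr rfl fun k _ => local_gain k, sum_sub_distrib,
    sum_sub_distrib, mul_add, mul_add,
    mul_sum_div_mul_eq_sum_div_mul _ _ _ fun k _ => card_eq_zero_of_sum hnL k,
    mul_sum_div_mul_eq_sum_div_mul _ _ _ fun k _ => card_eq_zero_of_sum hnR k]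
  ring

/-- Exact decomposition of the pooled variance impurity reduction (core of
Theorem 3): the centralized gain equals the size-weighted average of the
clients' local gains (the AvgImp estimator) plus the heterogeneity terms of
the node, left and right parts. -/
theorem stmt_10 (K : ℕ) (hK : 0 < K) (n : Fin K → ℕ) (hn : ∀ k, 0 < n k)
    (x y : (k : Fin K) → Fin (n k) → ℝ) (t : ℝ)
    -- left and right parts of each client's sample
    (Lset Rset : (k : Fin K) → Finset (Fin (n k)))
    (hLset : ∀ k, Lset k = Finset.univ.filter (fun i => x k i ≤ t))
    (hRset : ∀ k, Rset k = Finset.univ.filter (fun i => ¬ x k i ≤ t))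
    (hLne : ∀ k, (Lset k).Nonempty) (hRne : ∀ k, (Rset k).Nonempty)
    -- pooled sizes
    (Nr nL nR : ℝ)
    (hNr : Nr = ∑ k, (n k : ℝ))
    (hnL : nL = ∑ k, ((Lset k).card : ℝ))
    (hnR : nR = ∑ k, ((Rset k).card : ℝ))
    -- local empirical means over the node, left and right parts
    (ybar ybarL ybarR : Fin K → ℝ)
    (hybar : ∀ k, ybar k = (∑ i, y k i) / n k)
    (hybarL : ∀ k, ybarL k = (∑ i ∈ Lset k, y k i) / (Lset k).card)
    (hybarR : ∀ k, ybarR k = (∑ i ∈ Rset k, y k i) / (Rset k).card)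
    -- local empirical variances over the node, left and right parts
    (Vk VLk VRk : Fin K → ℝ)
    (hVk : ∀ k, Vk k = (∑ i, (y k i - ybar k) ^ 2) / n k)
    (hVLk : ∀ k, VLk k = (∑ i ∈ Lset k, (y k i - ybarL k) ^ 2) / (Lset k).card)
    (hVRk : ∀ k, VRk k = (∑ i ∈ Rset k, (y k i - ybarR k) ^ 2) / (Rset k).card)
    -- local impurity reductions
    (DIk : Fin K → ℝ)
    (hDIk : ∀ k, DIk k
      = Vk k - (((Lset k).card : ℝ) / n k) * VLk k - (((Rset k).card : ℝ) / n k) * VRk k)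
    -- pooled empirical means
    (Ybar YbarL YbarR : ℝ)
    (hYbar : Ybar = (∑ k, ∑ i, y k i) / Nr)
    (hYbarL : YbarL = (∑ k, ∑ i ∈ Lset k, y k i) / nL)
    (hYbarR : YbarR = (∑ k, ∑ i ∈ Rset k, y k i) / nR)
    -- pooled empirical variances
    (Vpool VLpool VRpool : ℝ)
    (hVpool : Vpool = (∑ k, ∑ i, (y k i - Ybar) ^ 2) / Nr)
    (hVLpool : VLpool = (∑ k, ∑ i ∈ Lset k, (y k i - YbarL) ^ 2) / nL)
    (hVRpool : VRpool = (∑ k, ∑ i ∈ Rset k, (y k i - YbarR) ^ 2) / nR)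
    -- pooled impurity reduction
    (DI : ℝ)
    (hDI : DI = Vpool - (nL / Nr) * VLpool - (nR / Nr) * VRpool)
    -- heterogeneity (Jensen-gap) terms
    (Enode EL ER : ℝ)
    (hEnode : Enode = ∑ k, ((n k : ℝ) / Nr) * (ybar k - Ybar) ^ 2)
    (hEL : EL = ∑ k, (((Lset k).card : ℝ) / nL) * (ybarL k - YbarL) ^ 2)
    (hER : ER = ∑ k, (((Rset k).card : ℝ) / nR) * (ybarR k - YbarR) ^ 2) :
    DI = (∑ k, ((n k : ℝ) / Nr) * DIk k) + Enode - (nL / Nr) * EL - (nR / Nr) * ER :=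
  stmt_10_general K n y Lset Rset Nr nL nR hnL hnR ybar ybarL ybarR hybar hybarL hybarR Vk VLk VRk
    hVk hVLk hVRk DIk hDIk Ybar YbarL YbarR Vpool VLpool VRpool hVpool hVLpool hVRpool DI hDI Enode
    EL ER hEnode hEL hER
end

section
/- In the setting of the exact decomposition ΔI = ∑_{k=1}^K (n_k/n)·ΔI_k + E(node) − (n_L/n)·E(left) − (n_R/n)·E(right), where each heterogeneity term E(m) = ∑_k (n_{m,k}/n_m)·(ȳ_{m,k} − ȳ_m)² is a size-weighted sum of squared deviations, the AvgImp approximation error satisfies |ΔI − ∑_{k=1}^K (n_k/n)·ΔI_k| ≤ E(node) + (n_L/n)·E(left) + (n_R/n)·E(right). -/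
/-! Splitting squared deviations from an arbitrary centre c about each client's own mean (the
law of total variance) writes every pooled variance as the size-weighted average of the clients'
variances plus the spread E(m) of the local means around c. Substituting the three identities
into ΔI gives the exact decomposition
ΔI − ∑ₖ (nₖ/n)·ΔIₖ = E(node) − (n_L/n)·E(left) − (n_R/n)·E(right),
and every E(m) is a weighted sum of squares, hence nonnegative. -/

open Finset

noncomputable def empMean {α : Type*} (S : Finset α) (y : α → ℝ) : ℝ :=
  (∑ i ∈ S, y i) / #S

noncomputable def empVar {α : Type*} (S : Finset α) (y : α → ℝ) : ℝ :=
  (∑ i ∈ S, (y i - empMean S y) ^ 2) / #S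

theorem sum_sq_sub_eq_card_mul_empVar_add {α : Type*} (S : Finset α) (y : α → ℝ) (c : ℝ) :
    ∑ i ∈ S, (y i - c) ^ 2 = #S * empVar S y + #S * (empMean S y - c) ^ 2 := by
  rcases S.eq_empty_or_nonempty with rfl | hS
  · simp
  have hcard : (#S : ℝ) ≠ 0 := by exact_mod_cast hS.card_pos.ne'
  have hsum : ∑ i ∈ S, y i = #S * empMean S y := by
    rw [empMean, mul_div_cancel₀ _ hcard]
  have hexpand : ∀ i ∈ S, (y i - c) ^ 2
      = (y i - empMean S y) ^ 2 + 2 * (empMean S y - c) * y i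
        + ((empMean S y - c) ^ 2 - 2 * (empMean S y - c) * empMean S y) := by
    intro i _; ring
  rw [sum_congr rfl hexpand, sum_add_distrib, sum_add_distrib, ← mul_sum, hsum, sum_const,
    nsmul_eq_mul, empVar, mul_div_cancel₀ _ hcard]
  ring

theorem pooled_sum_sq_sub_div_eq {ι : Type*} {α : ι → Type*} (s : Finset ι)
    (S : ∀ k, Finset (α k)) (y : ∀ k, α k → ℝ) (c N : ℝ) :
    (∑ k ∈ s, ∑ i ∈ S k, (y k i - c) ^ 2) / N
      = ∑ k ∈ s, (#(S k) / N) * empVar (S k) (y k)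
        + ∑ k ∈ s, (#(S k) / N) * (empMean (S k) (y k) - c) ^ 2 := by
  simp only [sum_sq_sub_eq_card_mul_empVar_add, sum_div, ← sum_add_distrib]
  exact sum_congr rfl fun k _ => by ring

theorem stmt_11_general (K : ℕ) (n : Fin K → ℕ) (hn : ∀ k, 0 < n k)
    (y : (k : Fin K) → Fin (n k) → ℝ)
    -- left and right parts of each client's sample
    (Lset Rset : (k : Fin K) → Finset (Fin (n k)))
    (hLne : ∀ k, (Lset k).Nonempty) (hRne : ∀ k, (Rset k).Nonempty)
    -- pooled sizes
    (Nr nL nR : ℝ)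
    (hNr : Nr = ∑ k, (n k : ℝ))
    (hnL : nL = ∑ k, ((Lset k).card : ℝ))
    (hnR : nR = ∑ k, ((Rset k).card : ℝ))
    -- local empirical means over the node, left and right parts
    (ybar ybarL ybarR : Fin K → ℝ)
    (hybar : ∀ k, ybar k = (∑ i, y k i) / n k)
    (hybarL : ∀ k, ybarL k = (∑ i ∈ Lset k, y k i) / (Lset k).card)
    (hybarR : ∀ k, ybarR k = (∑ i ∈ Rset k, y k i) / (Rset k).card)
    -- local empirical variances over the node, left and right parts
    (Vk VLk VRk : Fin K → ℝ)
    (hVk : ∀ k, Vk k = (∑ i, (y k i - ybar k) ^ 2) / n k)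
    (hVLk : ∀ k, VLk k = (∑ i ∈ Lset k, (y k i - ybarL k) ^ 2) / (Lset k).card)
    (hVRk : ∀ k, VRk k = (∑ i ∈ Rset k, (y k i - ybarR k) ^ 2) / (Rset k).card)
    -- local impurity reductions
    (DIk : Fin K → ℝ)
    (hDIk : ∀ k, DIk k
      = Vk k - (((Lset k).card : ℝ) / n k) * VLk k - (((Rset k).card : ℝ) / n k) * VRk k)
    -- pooled empirical means
    (Ybar YbarL YbarR : ℝ)
    -- pooled empirical variances
    (Vpool VLpool VRpool : ℝ)
    (hVpool : Vpool = (∑ k, ∑ i, (y k i - Ybar) ^ 2) / Nr)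
    (hVLpool : VLpool = (∑ k, ∑ i ∈ Lset k, (y k i - YbarL) ^ 2) / nL)
    (hVRpool : VRpool = (∑ k, ∑ i ∈ Rset k, (y k i - YbarR) ^ 2) / nR)
    -- pooled impurity reduction
    (DI : ℝ)
    (hDI : DI = Vpool - (nL / Nr) * VLpool - (nR / Nr) * VRpool)
    -- heterogeneity (Jensen-gap) terms
    (Enode EL ER : ℝ)
    (hEnode : Enode = ∑ k, ((n k : ℝ) / Nr) * (ybar k - Ybar) ^ 2)
    (hEL : EL = ∑ k, (((Lset k).card : ℝ) / nL) * (ybarL k - YbarL) ^ 2)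
    (hER : ER = ∑ k, (((Rset k).card : ℝ) / nR) * (ybarR k - YbarR) ^ 2) :
    |DI - ∑ k, ((n k : ℝ) / Nr) * DIk k| ≤ Enode + (nL / Nr) * EL + (nR / Nr) * ER := by
  have hnL_pos : ∀ k, 0 < nL := fun k => hnL ▸
    sum_pos' (fun _ _ => by positivity) ⟨k, mem_univ k, Nat.cast_pos.2 (hLne k).card_pos⟩
  have hnR_pos : ∀ k, 0 < nR := fun k => hnR ▸
    sum_pos' (fun _ _ => by positivity) ⟨k, mem_univ k, Nat.cast_pos.2 (hRne k).card_pos⟩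
  have hlocal : ∑ k, ((n k : ℝ) / Nr) * DIk k
      = ∑ k, ((n k : ℝ) / Nr) * Vk k - nL / Nr * ∑ k, (((Lset k).card : ℝ) / nL) * VLk k
        - nR / Nr * ∑ k, (((Rset k).card : ℝ) / nR) * VRk k := by
    simp only [mul_sum, ← sum_sub_distrib]
    refine sum_congr rfl fun k _ => ?_
    have := hn k; have := hnL_pos k; have := hnR_pos k
    rw [hDIk k]
    field_simp
  have hnode : Vpool = ∑ k, ((n k : ℝ) / Nr) * Vk k + Enode := by
    rw [hVpool, pooled_sum_sq_sub_div_eq, hEnode]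
    simp [hVk, hybar, empVar, empMean]
  have hleft : VLpool = ∑ k, (((Lset k).card : ℝ) / nL) * VLk k + EL := by
    rw [hVLpool, pooled_sum_sq_sub_div_eq, hEL]
    simp [hVLk, hybarL, empVar, empMean]
  have hright : VRpool = ∑ k, (((Rset k).card : ℝ) / nR) * VRk k + ER := by
    rw [hVRpool, pooled_sum_sq_sub_div_eq, hER]
    simp [hVRk, hybarR, empVar, empMean]
  have hdecomp : DI - ∑ k, ((n k : ℝ) / Nr) * DIk k = Enode - nL / Nr * EL - nR / Nr * ER := by
    rw [hDI, hlocal, hnode, hleft, hright]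
    ring
  have hEnode_nonneg : 0 ≤ Enode := by rw [hEnode, hNr]; positivity
  have hEL_nonneg : 0 ≤ nL / Nr * EL := by rw [hEL, hnL, hNr]; positivity
  have hER_nonneg : 0 ≤ nR / Nr * ER := by rw [hER, hnR, hNr]; positivity
  rw [hdecomp, abs_le]
  constructor <;> linarith

/-- AvgImp approximation error bound: in the setting of the exact
decomposition ΔI = ∑ₖ (nₖ/n)·ΔIₖ + E(node) − (n_L/n)·E(left) − (n_R/n)·E(right),
the deviation of the AvgImp estimator from the centralized gain is bounded by
E(node) + (n_L/n)·E(left) + (n_R/n)·E(right). -/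
theorem stmt_11 (K : ℕ) (hK : 0 < K) (n : Fin K → ℕ) (hn : ∀ k, 0 < n k)
    (x y : (k : Fin K) → Fin (n k) → ℝ) (t : ℝ)
    -- left and right parts of each client's sample
    (Lset Rset : (k : Fin K) → Finset (Fin (n k)))
    (hLset : ∀ k, Lset k = Finset.univ.filter (fun i => x k i ≤ t))
    (hRset : ∀ k, Rset k = Finset.univ.filter (fun i => ¬ x k i ≤ t))
    (hLne : ∀ k, (Lset k).Nonempty) (hRne : ∀ k, (Rset k).Nonempty)
    -- pooled sizes
    (Nr nL nR : ℝ)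
    (hNr : Nr = ∑ k, (n k : ℝ))
    (hnL : nL = ∑ k, ((Lset k).card : ℝ))
    (hnR : nR = ∑ k, ((Rset k).card : ℝ))
    -- local empirical means over the node, left and right parts
    (ybar ybarL ybarR : Fin K → ℝ)
    (hybar : ∀ k, ybar k = (∑ i, y k i) / n k)
    (hybarL : ∀ k, ybarL k = (∑ i ∈ Lset k, y k i) / (Lset k).card)
    (hybarR : ∀ k, ybarR k = (∑ i ∈ Rset k, y k i) / (Rset k).card)
    -- local empirical variances over the node, left and right parts
    (Vk VLk VRk : Fin K → ℝ)
    (hVk : ∀ k, Vk k = (∑ i, (y k i - ybar k) ^ 2) / n k)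
    (hVLk : ∀ k, VLk k = (∑ i ∈ Lset k, (y k i - ybarL k) ^ 2) / (Lset k).card)
    (hVRk : ∀ k, VRk k = (∑ i ∈ Rset k, (y k i - ybarR k) ^ 2) / (Rset k).card)
    -- local impurity reductions
    (DIk : Fin K → ℝ)
    (hDIk : ∀ k, DIk k
      = Vk k - (((Lset k).card : ℝ) / n k) * VLk k - (((Rset k).card : ℝ) / n k) * VRk k)
    -- pooled empirical means
    (Ybar YbarL YbarR : ℝ)
    (hYbar : Ybar = (∑ k, ∑ i, y k i) / Nr)
    (hYbarL : YbarL = (∑ k, ∑ i ∈ Lset k, y k i) / nL)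
    (hYbarR : YbarR = (∑ k, ∑ i ∈ Rset k, y k i) / nR)
    -- pooled empirical variances
    (Vpool VLpool VRpool : ℝ)
    (hVpool : Vpool = (∑ k, ∑ i, (y k i - Ybar) ^ 2) / Nr)
    (hVLpool : VLpool = (∑ k, ∑ i ∈ Lset k, (y k i - YbarL) ^ 2) / nL)
    (hVRpool : VRpool = (∑ k, ∑ i ∈ Rset k, (y k i - YbarR) ^ 2) / nR)
    -- pooled impurity reduction
    (DI : ℝ)
    (hDI : DI = Vpool - (nL / Nr) * VLpool - (nR / Nr) * VRpool)
    -- heterogeneity (Jensen-gap) terms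
    (Enode EL ER : ℝ)
    (hEnode : Enode = ∑ k, ((n k : ℝ) / Nr) * (ybar k - Ybar) ^ 2)
    (hEL : EL = ∑ k, (((Lset k).card : ℝ) / nL) * (ybarL k - YbarL) ^ 2)
    (hER : ER = ∑ k, (((Rset k).card : ℝ) / nR) * (ybarR k - YbarR) ^ 2) :
    |DI - ∑ k, ((n k : ℝ) / Nr) * DIk k| ≤ Enode + (nL / Nr) * EL + (nR / Nr) * ER :=
  stmt_11_general K n hn y Lset Rset hLne hRne Nr nL nR hNr hnL hnR ybar ybarL ybarR hybar hybarL
    hybarR Vk VLk VRk hVk hVLk hVRk DIk hDIk Ybar YbarL YbarR Vpool VLpool VRpool hVpool hVLpool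
    hVRpool DI hDI Enode EL ER hEnode hEL hER
end
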